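/- Let F ≤ E ≤ L be a tower of finite Galois extensions of a non-archimedean local field F. Then for every s ∈ ℝ, the trace map satisfies Tr_{L/E}[L_{≥ s}] = E_{≥ s + c_{L/E}}. -/

import Mathlib

noncomputable section

/-- The minimum of an extended real `d` and a real `x`, as a real number. -/
def rmin (d : WithTop ℝ) (x : ℝ) : ℝ := WithTop.untopD x (min d (x : WithTop ℝ))

/-- `v` is an additive (`WithTop ℝ`-valued) valuation on the field `K`. -/
structure IsValuation {K : Type*} [Field K] (v : K → WithTop ℝ) : Prop where
  map_zero : v 0 = ⊤
  ne_top : ∀ x : K, x ≠ 0 → v x ≠ ⊤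
  map_mul : ∀ x y : K, v (x * y) = v x + v y
  min_le_map_add : ∀ x y : K, min (v x) (v y) ≤ v (x + y)

/-- `π` is a uniformizer for `v`: an element of minimal positive valuation. -/
def IsUnif {K : Type*} (v : K → WithTop ℝ) (π : K) : Prop :=
  0 < v π ∧ v π ≠ ⊤ ∧ ∀ x : K, 0 < v x → v π ≤ v x

variable (E L : Type*) [Field E] [Field L] [Algebra E L]

/-- The inertia subgroup `Γ(L/E)` of `Gal(L/E)`. -/
def inertia (v : L → WithTop ℝ) : Set (L ≃ₐ[E] L) :=
  {σ | ∀ x : L, 0 ≤ v x → 0 < v (σ x - x)}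

/-- `depth_{L/E}(σ) := val((σ(π) − π)/π)` for a uniformizer `π`. -/
def ramDepth (v : L → WithTop ℝ) (π : L) (σ : L ≃ₐ[E] L) : WithTop ℝ :=
  v ((σ π - π) / π)

/-- The lower-numbering ramification group `Γ(L/E)_r`. -/
def lowerRam (v : L → WithTop ℝ) (π : L) (r : ℝ) : Set (L ≃ₐ[E] L) :=
  {σ ∈ inertia E L v | (r : WithTop ℝ) ≤ ramDepth E L v π σ}

/-- `ℓ(L/E)`, the last break in the lower numbering. -/
def ell (v : L → WithTop ℝ) (π : L) : ℝ :=
  sInf {r : ℝ | 0 ≤ r ∧ lowerRam E L v π r = {1}}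

/-- The normalized Hasse–Herbrand function `φ_{L/E}`. -/
def hhPhi (v : L → WithTop ℝ) (π : L) (x : ℝ) : ℝ :=
  ∑ᶠ σ ∈ inertia E L v, rmin (ramDepth E L v π σ) x

/-- `ψ_{L/E}`, the inverse of `φ_{L/E}`. -/
def hhPsi (v : L → WithTop ℝ) (π : L) : ℝ → ℝ :=
  Function.invFun (hhPhi E L v π)

/-- The upper-numbering ramification group `Γ(L/E)^s = Γ(L/E)_{ψ_{L/E}(s)}`. -/
def upperRam (v : L → WithTop ℝ) (π : L) (s : ℝ) : Set (L ≃ₐ[E] L) :=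
  lowerRam E L v π (hhPsi E L v π s)

/-- `u(L/E)`, the last break in the upper numbering. -/
def uBreak (v : L → WithTop ℝ) (π : L) : ℝ :=
  sInf {s : ℝ | 0 ≤ s ∧ upperRam E L v π s = {1}}

/-- The ramification index `e(L/E)`, read off from the value groups. -/
def ramIdx (v : L → WithTop ℝ) : ℕ :=
  sInf {n : ℕ | 0 < n ∧ ∃ (πE : E) (πL : L),
    IsUnif (fun y : E => v (algebraMap E L y)) πE ∧ IsUnif v πL ∧
    v (algebraMap E L πE) = n • v πL}

/-- `K_{≥ s} = {x ∈ K : val x ≥ s}`. -/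
def ballGE {K : Type*} (v : K → WithTop ℝ) (s : ℝ) : Set K :=
  {x | (s : WithTop ℝ) ≤ v x}

/-- `K_{> s} = {x ∈ K : val x > s}`. -/
def ballGT {K : Type*} (v : K → WithTop ℝ) (s : ℝ) : Set K :=
  {x | (s : WithTop ℝ) < v x}

/-- `K^×_{≥ s}`: the units of the valuation ring for `s = 0`, and `1 + K_{≥ s}` for `s > 0`. -/
def unitsGE {K : Type*} [Field K] (v : K → WithTop ℝ) (s : ℝ) : Set K :=
  if s = 0 then {x | v x = 0} else {x | (s : WithTop ℝ) ≤ v (x - 1)}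

/-- `K^×_{> s} = 1 + K_{> s}`. -/
def unitsGT {K : Type*} [Field K] (v : K → WithTop ℝ) (s : ℝ) : Set K :=
  {x | (s : WithTop ℝ) < v (x - 1)}

/-- The package of "local field" axioms for a finite extension `L/E`: `v` is a
Galois-invariant discrete valuation on `L` whose restriction to `E` makes `E` a
complete discretely valued field with finite residue field. -/
structure IsLocalData (v : L → WithTop ℝ) : Prop where
  isval : IsValuation v
  gal_inv : ∀ (σ : L ≃+* L) (x : L), v (σ x) = v x
  exists_unif_base : ∃ π : E, IsUnif (fun y : E => v (algebraMap E L y)) π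
  exists_unif : ∃ π : L, IsUnif v π
  discrete : ∀ π : L, IsUnif v π → ∀ x : L, x ≠ 0 →
    ∃ n : ℤ, v x = (((n : ℝ) * WithTop.untopD 0 (v π) : ℝ) : WithTop ℝ)
  residue_finite : ∃ S : Finset E, ∀ x : E, 0 ≤ v (algebraMap E L x) →
    ∃ y ∈ S, 0 < v (algebraMap E L (x - y))
  complete : ∀ a : ℕ → E, (∀ M : ℝ, ∃ N : ℕ, ∀ m, N ≤ m → ∀ n, N ≤ n →
      (M : WithTop ℝ) ≤ v (algebraMap E L (a m - a n))) →
    ∃ b : E, ∀ M : ℝ, ∃ N : ℕ, ∀ n, N ≤ n →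
      (M : WithTop ℝ) ≤ v (algebraMap E L (a n - b))

/-- Normalization: `val(F^×) = ℤ` (computed inside an extension `L'` of `F`). -/
structure IsNormalizedBase (F L' : Type*) [Field F] [Field L'] [Algebra F L']
    (v : L' → WithTop ℝ) : Prop where
  int_valued : ∀ x : F, x ≠ 0 → ∃ n : ℤ, v (algebraMap F L' x) = ((n : ℝ) : WithTop ℝ)
  int_surj : ∀ n : ℤ, ∃ x : F, x ≠ 0 ∧ v (algebraMap F L' x) = ((n : ℝ) : WithTop ℝ)

/-- `c_{Λ_K} := max { val x | x ∈ K, Λ_K(x) ≠ 1 }` where `Λ_K = Λ ∘ Tr_{K/F}` and the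
valuation of elements of `K` is computed inside `L'`. -/
def cLam (F K L' : Type*) [Field F] [Field K] [Field L'] [Algebra F K] [Algebra K L']
    (v : L' → WithTop ℝ) (Λ : AddChar F ℂ) : ℝ :=
  sSup {t : ℝ | ∃ x : K, Λ (Algebra.trace F K x) ≠ 1 ∧ v (algebraMap K L' x) = (t : WithTop ℝ)}

/-- `c_{L'/E'} := c_{Λ_{E'}} − c_{Λ_{L'}}`. -/
def cExt (F E' L' : Type*) [Field F] [Field E'] [Field L'] [Algebra F E'] [Algebra F L']
    [Algebra E' L'] (v : L' → WithTop ℝ) (Λ : AddChar F ℂ) : ℝ :=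
  cLam F E' L' v Λ - cLam F L' L' v Λ

/-- The additive character `Λ` is trivial on `𝔪_F` but nontrivial on `𝒪_F`. -/
structure IsAdaptedChar (F L' : Type*) [Field F] [Field L'] [Algebra F L']
    (v : L' → WithTop ℝ) (Λ : AddChar F ℂ) : Prop where
  trivial_on_m : ∀ x : F, 0 < v (algebraMap F L' x) → Λ x = 1
  nontrivial_on_O : ∃ x : F, 0 ≤ v (algebraMap F L' x) ∧ Λ x ≠ 1

/-- The "local field" axioms for an ambient (typically separably closed) extension
`Ω` of the non-archimedean local field `F`: `v` is a Galois-invariant valuation on `Ω`,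
normalized so that `val(F^×) = ℤ`, discrete on every finite subextension, and `F` is
complete with finite residue field. -/
structure IsLocalAmbient (F Ω : Type*) [Field F] [Field Ω] [Algebra F Ω]
    (v : Ω → WithTop ℝ) : Prop where
  isval : IsValuation v
  gal_inv : ∀ (σ : Ω ≃+* Ω) (x : Ω), v (σ x) = v x
  int_valued : ∀ x : F, x ≠ 0 → ∃ n : ℤ, v (algebraMap F Ω x) = ((n : ℝ) : WithTop ℝ)
  int_surj : ∀ n : ℤ, ∃ x : F, x ≠ 0 ∧ v (algebraMap F Ω x) = ((n : ℝ) : WithTop ℝ)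
  exists_unif : ∀ K : IntermediateField F Ω, FiniteDimensional F ↥K →
    ∃ π : ↥K, IsUnif (fun y : ↥K => v (y : Ω)) π
  residue_finite : ∃ S : Finset F, ∀ x : F, 0 ≤ v (algebraMap F Ω x) →
    ∃ y ∈ S, 0 < v (algebraMap F Ω (x - y))
  complete : ∀ a : ℕ → F, (∀ M : ℝ, ∃ N : ℕ, ∀ m, N ≤ m → ∀ n, N ≤ n →
      (M : WithTop ℝ) ≤ v (algebraMap F Ω (a m - a n))) →
    ∃ b : F, ∀ M : ℝ, ∃ N : ℕ, ∀ n, N ≤ n →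
      (M : WithTop ℝ) ≤ v (algebraMap F Ω (a n - b))

end
/-!
The character `Λ_L = Λ_F ∘ Tr_{L/F}` factors as `Λ_E ∘ Tr_{L/E}`, and `Tr_{L/E}` is `E`-linear,
so multiplying by scalars of `E` transports elements between the two sets whose suprema define
`c_{Λ_E}` and `c_{Λ_L}`. Both suprema are attained: by Galois invariance `val (Tr x) ≥ val x`,
so `Λ_K(x) ≠ 1` forces `val x ≤ 0`, and the values lie in a discrete group.
If `x ∈ L_{≥ s}` had `val (Tr x) < s + c_{L/E}`, rescaling `x` so that its trace becomes an element
realising `c_{Λ_E}` would give an element of valuation `> c_{Λ_L}` on which `Λ_L` is nontrivial.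
Conversely, for `z ∈ E_{≥ s + c_{L/E}}` and `x_L` realising `c_{Λ_L}`, the element
`(z / Tr x_L) • x_L` is a preimage of `z` in `L_{≥ s}`, because `val (Tr x_L) ≤ c_{Λ_E}`.
-/

theorem mem_ballGE {K : Type*} {v : K → WithTop ℝ} {s : ℝ} {x : K} :
    x ∈ ballGE v s ↔ (s : WithTop ℝ) ≤ v x :=
  Iff.rfl

theorem mem_ballGE_of_eq_coe {K : Type*} {v : K → WithTop ℝ} {s r : ℝ} {x : K}
    (hx : v x = r) : x ∈ ballGE v s ↔ s ≤ r := by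
  rw [mem_ballGE, hx, WithTop.coe_le_coe]

theorem csSup_mem_of_subset_zmultiples {S : Set ℝ} {δ : ℝ} (hδ : 0 < δ) (hne : S.Nonempty)
    (hbdd : BddAbove S) (hS : S ⊆ AddSubgroup.zmultiples δ) : sSup S ∈ S := by
  obtain ⟨b, hb⟩ := hbdd
  have hmem : ∀ {t}, t ∈ S → ∃ n : ℤ, (n : ℝ) * δ = t := fun ht => by
    simpa [AddSubgroup.mem_zmultiples_iff, zsmul_eq_mul] using hS ht
  obtain ⟨m, hmS, hm⟩ := Int.exists_greatest_of_bdd (P := fun n : ℤ => (n : ℝ) * δ ∈ S)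
    ⟨⌊b / δ⌋, fun n hn => Int.le_floor.mpr ((le_div_iff₀ hδ).mpr (hb hn))⟩
    (hne.elim fun t ht => by obtain ⟨n, rfl⟩ := hmem ht; exact ⟨n, ht⟩)
  have hgreatest : IsGreatest S (m * δ) := ⟨hmS, fun t ht => by
    obtain ⟨n, rfl⟩ := hmem ht
    exact mul_le_mul_of_nonneg_right (by exact_mod_cast hm n ht) hδ.le⟩
  exact hgreatest.csSup_mem

namespace IsValuation

variable {K : Type*} [Field K] {v : K → WithTop ℝ}

theorem exists_coe_eq (hv : IsValuation v) {x : K} (hx : x ≠ 0) : ∃ r : ℝ, v x = r :=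
  (WithTop.ne_top_iff_exists.mp (hv.ne_top x hx)).imp fun _ h => h.symm

theorem ne_zero_of_eq_coe (hv : IsValuation v) {x : K} {r : ℝ} (hx : v x = r) : x ≠ 0 := by
  rintro rfl
  exact WithTop.coe_ne_top (hx.symm.trans hv.map_zero)

theorem zero_mem_ballGE (hv : IsValuation v) (s : ℝ) : (0 : K) ∈ ballGE v s := by
  rw [mem_ballGE, hv.map_zero]
  exact le_top

theorem map_mul_of_eq_coe (hv : IsValuation v) {x y : K} {a b : ℝ} (hx : v x = a)
    (hy : v y = b) : v (x * y) = ((a + b : ℝ) : WithTop ℝ) := by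
  rw [hv.map_mul, hx, hy, WithTop.coe_add]

theorem map_div_of_eq_coe (hv : IsValuation v) {x y : K} {a b : ℝ} (hx : v x = a)
    (hy : v y = b) : v (x / y) = ((a - b : ℝ) : WithTop ℝ) := by
  have hy0 := hv.ne_zero_of_eq_coe hy
  obtain ⟨c, hc⟩ := hv.exists_coe_eq (div_ne_zero (hv.ne_zero_of_eq_coe hx) hy0)
  have hmul := hv.map_mul_of_eq_coe hc hy
  rw [div_mul_cancel₀ x hy0, hx, WithTop.coe_eq_coe] at hmul
  rw [hc, hmul, add_sub_cancel_right]

theorem le_map_sum (hv : IsValuation v) {ι : Type*} (t : Finset ι) (f : ι → K) {c : WithTop ℝ}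
    (h : ∀ i ∈ t, c ≤ v (f i)) : c ≤ v (∑ i ∈ t, f i) := by
  classical
  induction t using Finset.induction_on with
  | empty => rw [Finset.sum_empty, hv.map_zero]; exact le_top
  | insert a t ha ih =>
    rw [Finset.sum_insert ha]
    exact (le_min (h a (Finset.mem_insert_self a t))
      (ih fun i hi => h i (Finset.mem_insert_of_mem hi))).trans (hv.min_le_map_add _ _)

theorem comp_algebraMap {L : Type*} [Field L] [Algebra K L] {w : L → WithTop ℝ}
    (hw : IsValuation w) : IsValuation fun x : K => w (algebraMap K L x) where
  map_zero := by rw [_root_.map_zero, hw.map_zero]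
  ne_top x hx := hw.ne_top _ ((map_ne_zero _).mpr hx)
  map_mul x y := by rw [_root_.map_mul, hw.map_mul]
  min_le_map_add x y := by simpa only [_root_.map_add] using hw.min_le_map_add _ _

end IsValuation

section TraceImage

variable {E L : Type*} [Field E] [Field L] [Algebra E L] {w : L → WithTop ℝ} {ψ : E → ℂ}
  {cE cL : ℝ}

theorem trace_image_ballGE_subset (hw : IsValuation w)
    (hcE : cE ∈ {t : ℝ | ∃ y : E, ψ y ≠ 1 ∧ w (algebraMap E L y) = t})
    (hcL : cL ∈ upperBounds {t : ℝ | ∃ x : L, ψ (Algebra.trace E L x) ≠ 1 ∧ w x = t}) (s : ℝ) :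
    (fun x : L => Algebra.trace E L x) '' ballGE w s
      ⊆ ballGE (fun y : E => w (algebraMap E L y)) (s + (cE - cL)) := by
  rintro _ ⟨x, hx, rfl⟩
  obtain ⟨y, hy, hwy⟩ := hcE
  set z := Algebra.trace E L x
  show z ∈ _
  by_cases hz : z = 0
  · rw [hz]
    exact hw.comp_algebraMap.zero_mem_ballGE _
  obtain ⟨r, hr⟩ := hw.exists_coe_eq (x := x) (by rintro rfl; exact hz (map_zero _))
  obtain ⟨b, hb⟩ : ∃ b : ℝ, w (algebraMap E L z) = b := hw.comp_algebraMap.exists_coe_eq hz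
  have hscaled : cE - b + r ≤ cL := hcL ⟨(y / z) • x,
    by rwa [map_smul, smul_eq_mul, div_mul_cancel₀ y hz],
    by rw [Algebra.smul_def, hw.map_mul_of_eq_coe (hw.comp_algebraMap.map_div_of_eq_coe hwy hb) hr]⟩
  rw [mem_ballGE_of_eq_coe hr] at hx
  rw [mem_ballGE_of_eq_coe (v := fun y : E => w (algebraMap E L y)) hb]
  linarith

theorem ballGE_subset_trace_image (hw : IsValuation w) (hψ : ψ 0 = 1)
    (hcE : cE ∈ upperBounds {t : ℝ | ∃ y : E, ψ y ≠ 1 ∧ w (algebraMap E L y) = t})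
    (hcL : cL ∈ {t : ℝ | ∃ x : L, ψ (Algebra.trace E L x) ≠ 1 ∧ w x = t}) (s : ℝ) :
    ballGE (fun y : E => w (algebraMap E L y)) (s + (cE - cL))
      ⊆ (fun x : L => Algebra.trace E L x) '' ballGE w s := by
  intro z hz
  obtain ⟨x, hx, hwx⟩ := hcL
  by_cases hz0 : z = 0
  · exact ⟨0, hw.zero_mem_ballGE s, (map_zero _).trans hz0.symm⟩
  set y := Algebra.trace E L x
  obtain ⟨a, ha⟩ : ∃ a : ℝ, w (algebraMap E L z) = a := hw.comp_algebraMap.exists_coe_eq hz0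
  obtain ⟨b, hb⟩ : ∃ b : ℝ, w (algebraMap E L y) = b :=
    hw.comp_algebraMap.exists_coe_eq (by rintro h; exact hx (h ▸ hψ))
  have hbE : b ≤ cE := hcE ⟨y, hx, hb⟩
  have hy0 : y ≠ 0 := hw.comp_algebraMap.ne_zero_of_eq_coe hb
  refine ⟨(z / y) • x, ?_, show Algebra.trace E L ((z / y) • x) = z by
    rw [map_smul, smul_eq_mul, div_mul_cancel₀ z hy0]⟩
  rw [mem_ballGE_of_eq_coe (v := fun y : E => w (algebraMap E L y)) ha] at hz
  rw [Algebra.smul_def, mem_ballGE_of_eq_coe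
    (hw.map_mul_of_eq_coe (hw.comp_algebraMap.map_div_of_eq_coe ha hb) hwx)]
  linarith

end TraceImage

theorem IsLocalData.exists_forall_val_mem_zmultiples {E L : Type*} [Field E] [Field L]
    [Algebra E L] {v : L → WithTop ℝ} (hv : IsLocalData E L v) :
    ∃ d : ℝ, 0 < d ∧ ∀ (x : L) (r : ℝ), v x = r → r ∈ AddSubgroup.zmultiples d := by
  obtain ⟨π, hπ⟩ := hv.exists_unif
  obtain ⟨d, hd⟩ := WithTop.ne_top_iff_exists.mp hπ.2.1
  refine ⟨d, by exact_mod_cast hd ▸ hπ.1, fun x r hx => ?_⟩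
  obtain ⟨n, hn⟩ := hv.discrete π hπ x (hv.isval.ne_zero_of_eq_coe hx)
  rw [hx, ← hd, WithTop.untopD_coe, WithTop.coe_eq_coe] at hn
  exact ⟨n, (zsmul_eq_mul _ _).trans hn.symm⟩

section Conductor

variable {F K L : Type*} [Field F] [Field K] [Field L] [Algebra F K] [Algebra K L] [Algebra F L]
  [IsScalarTower F K L] [FiniteDimensional F K] [IsGalois F K] [Normal F L]
  {v : L → WithTop ℝ} {Λ : AddChar F ℂ}

theorem IsValuation.map_algebraMap_le_map_trace (hv : IsValuation v)
    (hinv : ∀ (σ : L ≃ₐ[F] L) (x : L), v (σ x) = v x) (x : K) :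
    v (algebraMap K L x) ≤ v (algebraMap F L (Algebra.trace F K x)) := by
  rw [IsScalarTower.algebraMap_apply F K L, trace_eq_sum_automorphisms, map_sum]
  refine hv.le_map_sum _ _ fun σ _ => ?_
  rw [← AlgEquiv.liftNormal_commutes σ L, hinv]

theorem IsAdaptedChar.val_le_zero (hΛ : IsAdaptedChar F L v Λ) (hv : IsValuation v)
    (hinv : ∀ (σ : L ≃ₐ[F] L) (x : L), v (σ x) = v x) {x : K}
    (hx : Λ (Algebra.trace F K x) ≠ 1) : v (algebraMap K L x) ≤ 0 := by
  by_contra! h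
  exact hx (hΛ.trivial_on_m _ (h.trans_le (hv.map_algebraMap_le_map_trace hinv x)))

theorem isGreatest_cLam (hv : IsLocalData F L v) (hΛ : IsAdaptedChar F L v Λ) :
    IsGreatest {t : ℝ | ∃ x : K, Λ (Algebra.trace F K x) ≠ 1 ∧ v (algebraMap K L x) = t}
      (cLam F K L v Λ) := by
  set S := {t : ℝ | ∃ x : K, Λ (Algebra.trace F K x) ≠ 1 ∧ v (algebraMap K L x) = t}
  have hinv : ∀ (σ : L ≃ₐ[F] L) (x : L), v (σ x) = v x := fun σ => hv.gal_inv σ.toRingEquiv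
  have hbdd : ∀ t ∈ S, t ≤ 0 := by
    rintro t ⟨x, hx, hxt⟩
    have h := hΛ.val_le_zero hv.isval hinv hx
    rwa [hxt, ← WithTop.coe_zero, WithTop.coe_le_coe] at h
  have hne : S.Nonempty := by
    obtain ⟨x₀, -, hx₀⟩ := hΛ.nontrivial_on_O
    obtain ⟨x, rfl⟩ := Algebra.trace_surjective F K x₀
    have hx : x ≠ 0 := by
      rintro rfl
      exact hx₀ (by rw [map_zero, AddChar.map_zero_eq_one])
    obtain ⟨r, hr⟩ := hv.isval.exists_coe_eq ((map_ne_zero (algebraMap K L)).mpr hx)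
    exact ⟨r, x, hx₀, hr⟩
  obtain ⟨d, hd, hdisc⟩ := hv.exists_forall_val_mem_zmultiples
  have hS : S ⊆ AddSubgroup.zmultiples d := by
    rintro t ⟨x, -, hx⟩
    exact hdisc _ _ hx
  exact ⟨csSup_mem_of_subset_zmultiples hd hne ⟨0, hbdd⟩ hS, fun t ht => le_csSup ⟨0, hbdd⟩ ht⟩

end Conductor

theorem trace_image_ballGE_general
    (F E L : Type*) [Field F] [Field E] [Field L]
    [Algebra F E] [Algebra E L] [Algebra F L] [IsScalarTower F E L]
    [FiniteDimensional F E] [FiniteDimensional E L] [FiniteDimensional F L]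
    [IsGalois F E] [IsGalois F L]
    (v : L → WithTop ℝ) (hv : IsLocalData F L v) (Λ : AddChar F ℂ) (hΛ : IsAdaptedChar F L v Λ)
    (s : ℝ) :
    (fun x : L => Algebra.trace E L x) '' ballGE v s
      = ballGE (fun y : E => v (algebraMap E L y)) (s + cExt F E L v Λ) := by
  have hE := isGreatest_cLam (K := E) hv hΛ
  have hL := isGreatest_cLam (K := L) hv hΛ
  simp only [Algebra.algebraMap_self_apply, ← Algebra.trace_trace (R := F) (S := E) (T := L)] at hL
  exact (trace_image_ballGE_subset hv.isval hE.1 hL.2 s).antisymm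
    (ballGE_subset_trace_image hv.isval (by simp) hE.2 hL.1 s)

/-- For a tower `F ≤ E ≤ L` of finite Galois extensions of a
non-archimedean local field `F` and every `s ∈ ℝ`, the trace map satisfies
`Tr_{L/E}[L_{≥ s}] = E_{≥ s + c_{L/E}}`. -/
theorem trace_image_ballGE
    (F E L : Type*) [Field F] [Field E] [Field L]
    [Algebra F E] [Algebra E L] [Algebra F L] [IsScalarTower F E L]
    [FiniteDimensional F E] [FiniteDimensional E L] [FiniteDimensional F L]
    [IsGalois F E] [IsGalois F L] [IsGalois E L]
    (v : L → WithTop ℝ) (hv : IsLocalData F L v) (hnorm : IsNormalizedBase F L v)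
    (Λ : AddChar F ℂ) (hΛ : IsAdaptedChar F L v Λ)
    (s : ℝ) :
    (fun x : L => Algebra.trace E L x) '' ballGE v s
      = ballGE (fun y : E => v (algebraMap E L y)) (s + cExt F E L v Λ) :=
  trace_image_ballGE_general F E L v hv Λ hΛ s
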